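/- Let C_V assign to each (q, v) ∈ ℝᵐ × ℝᵐ a linear subspace C_V(q, v) ⊆ ℝᵐ, and let L : ℝᵐ × ℝᵐ → ℝ be continuously differentiable. On 𝒫 = ℝᵐ × ℝᵐ × ℝᵐ define the distribution Δ_𝒫(q, v, p) := C_V(q, v) × ℝᵐ × ℝᵐ, the presymplectic form ω_𝒫((a, b, c), (a′, b′, c′)) := ⟨a, c′⟩ − ⟨a′, c⟩, and the generalized energy E(q, v, p) := ⟨p, v⟩ − L(q, v), whose differential identified with a vector is dE(q, v, p) = (−(∂L/∂q)(q, v), p − (∂L/∂v)(q, v), v). Then a C¹ curve (q(t), v(t), p(t)) satisfies the Dirac dynamical system ((q̇(t), v̇(t), ṗ(t)), dE(q(t), v(t), p(t))) ∈ D(ω_𝒫, Δ_𝒫(q(t), v(t), p(t))) for all t if and only if for all t: q̇(t) ∈ C_V(q(t), v(t)), v(t) = q̇(t), p(t) = (∂L/∂v)(q(t), v(t)), and ⟨ṗ(t) − (∂L/∂q)(q(t), v(t)), w⟩ = 0 for all w ∈ C_V(q(t), v(t)). -/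
import Mathlib


open scoped RealInnerProductSpace

noncomputable section

/-- `ℝᵐ` with the Euclidean inner product. -/
abbrev E (m : ℕ) : Type := EuclideanSpace ℝ (Fin m)

/-- Gradient of `L` in its first argument `q`. -/
noncomputable def gQ {m : ℕ} (L : E m → E m → ℝ) (q v : E m) : E m :=
  gradient (fun x => L x v) q

/-- Gradient of `L` in its second argument `v`. -/
noncomputable def gV {m : ℕ} (L : E m → E m → ℝ) (q v : E m) : E m :=
  gradient (fun y => L q y) v

/-- The Dirac structure induced by a form `ω` and a subspace `Δ`, covectors being
identified with vectors via the pairing `pair` (the Euclidean inner product). -/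
def Dirac {F : Type*} (pair ω : F → F → ℝ) (Δ : Set F) : Set (F × F) :=
  {p | p.1 ∈ Δ ∧ ∀ w ∈ Δ, pair p.2 w = ω p.1 w}

/-- Euclidean pairing on `𝒫 = ℝᵐ × ℝᵐ × ℝᵐ`. -/
def pair3 {m : ℕ} (ζ w : E m × E m × E m) : ℝ :=
  ⟪ζ.1, w.1⟫ + ⟪ζ.2.1, w.2.1⟫ + ⟪ζ.2.2, w.2.2⟫

/-- Presymplectic form `ω_𝒫((a,b,c),(a',b',c')) = ⟨a,c'⟩ − ⟨a',c⟩` on `𝒫`. -/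
def omega3 {m : ℕ} (x y : E m × E m × E m) : ℝ :=
  ⟪x.1, y.2.2⟫ - ⟪y.1, x.2.2⟫

/-- the Dirac dynamical system on the Pontryagin bundle, with generalized
energy `E(q,v,p) = ⟨p,v⟩ − L(q,v)`, is equivalent to the implicit first-order
differential-algebraic equations. -/
theorem statement3 {m : ℕ} (CV : E m → E m → Submodule ℝ (E m))
    (L : E m → E m → ℝ) (hL : ContDiff ℝ 1 (Function.uncurry L))
    (q v p : ℝ → E m)
    (hq : ContDiff ℝ 1 q) (hv : ContDiff ℝ 1 v) (hp : ContDiff ℝ 1 p) :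
    (∀ t : ℝ,
      ((deriv q t, deriv v t, deriv p t),
       (-(gQ L (q t) (v t)), p t - gV L (q t) (v t), v t)) ∈
        Dirac pair3 omega3 {w : E m × E m × E m | w.1 ∈ CV (q t) (v t)}) ↔
    (∀ t : ℝ, deriv q t ∈ CV (q t) (v t) ∧ v t = deriv q t ∧
      p t = gV L (q t) (v t) ∧
      ∀ w ∈ CV (q t) (v t), ⟪deriv p t - gQ L (q t) (v t), w⟫ = 0) := by
  constructor
  · intro h t
    obtain ⟨h1, h2⟩ := h t
    refine ⟨h1, ?_, ?_, ?_⟩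
    · have key := h2 (0, 0, v t - deriv q t) (Submodule.zero_mem _)
      simp only [pair3, omega3, inner_zero_right, inner_zero_left, add_zero, zero_add,
        zero_sub, sub_zero] at key
      have h0 : ⟪v t - deriv q t, v t - deriv q t⟫ = 0 := by
        rw [inner_sub_left, key]; ring
      exact sub_eq_zero.mp (inner_self_eq_zero.mp h0)
    · have key := h2 (0, p t - gV L (q t) (v t), 0) (Submodule.zero_mem _)
      simp only [pair3, omega3, inner_zero_right, inner_zero_left, add_zero, zero_add,
        sub_zero, sub_self] at key
      exact sub_eq_zero.mp (inner_self_eq_zero.mp key)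
    · intro w hw
      have key := h2 (w, 0, 0) hw
      simp only [pair3, omega3, inner_zero_right, inner_zero_left, add_zero, zero_add,
        zero_sub, inner_neg_left] at key
      rw [inner_sub_left]; linarith [real_inner_comm w (deriv p t)]
  · intro h t
    obtain ⟨h1, h2, h3, h4⟩ := h t
    refine ⟨h1, ?_⟩
    intro w hw
    have key := h4 w.1 hw
    rw [inner_sub_left, h2] at key
    simp only [pair3, omega3, h3, sub_self, inner_zero_left, add_zero, zero_add, h2,
      inner_neg_left]
    linarith [real_inner_comm w.1 (deriv p t)]

end
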